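/- There exists an infinite word w over Σ₃ = {0,1,2} that is not periodic (i.e., w ≠ y^ω for every nonempty finite word y) such that if x is a subword of w with |x| ≥ 3, then x^R is not a subword of w. -/

import Mathlib

/-- `x` occurs as a contiguous block of consecutive letters of the infinite word `w`. -/
def IsFactor {α : Type*} (x : List α) (w : ℕ → α) : Prop :=
  ∃ i : ℕ, x = (List.range x.length).map fun j => w (i + j)

/-- The periodic infinite word `y^ω = yyy⋯`. -/
def powOmega {α : Type*} (y : List α) (h : y ≠ []) : ℕ → α :=
  fun n => y[n % y.length]'(Nat.mod_lt n (List.length_pos_iff.mpr h))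

/-- Difference sequence: 0 at powers of two ≥ 2, else 1. -/
def dd (n : ℕ) : Fin 3 := if ∃ k < n, n = 2 ^ (k + 1) then 0 else 1

def ww (n : ℕ) : Fin 3 := ∑ k ∈ Finset.range n, dd k

lemma ww_succ (n : ℕ) : ww (n + 1) = ww n + dd n := Finset.sum_range_succ _ _

lemma dd_eq (n : ℕ) : dd n = ww (n + 1) - ww n := by
  rw [ww_succ]; abel

lemma dd01 (n : ℕ) : dd n = 0 ∨ dd n = 1 := by
  unfold dd; split <;> simp

lemma dd_zero_iff (n : ℕ) : dd n = 0 ↔ ∃ k, n = 2 ^ (k + 1) := by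
  unfold dd
  split
  · rename_i h
    obtain ⟨k, _, hk⟩ := h
    exact iff_of_true rfl ⟨k, hk⟩
  · rename_i h
    refine iff_of_false (by decide) ?_
    rintro ⟨k, hk⟩
    refine h ⟨k, ?_, hk⟩
    calc k < 2 ^ k := (Nat.lt_two_pow_self (n := k))
    _ ≤ 2 ^ (k + 1) := Nat.pow_le_pow_right (by norm_num) (Nat.le_succ k)
    _ = n := hk.symm

lemma dd_no_two (n : ℕ) : ¬ (dd n = 0 ∧ dd (n + 1) = 0) := by
  rintro ⟨h0, h1⟩
  obtain ⟨a, ha⟩ := (dd_zero_iff n).mp h0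
  obtain ⟨b, hb⟩ := (dd_zero_iff (n + 1)).mp h1
  have e1 : 2 ^ (a + 1) = 2 * 2 ^ a := by ring
  have e2 : 2 ^ (b + 1) = 2 * 2 ^ b := by ring
  omega

theorem stmt_3 :
    ∃ w : ℕ → Fin 3,
      (¬ ∃ (y : List (Fin 3)) (hy : y ≠ []), w = powOmega y hy) ∧
      (∀ x : List (Fin 3), IsFactor x w → 3 ≤ x.length → ¬ IsFactor x.reverse w) := by
  refine ⟨ww, ?_, ?_⟩
  · rintro ⟨y, hy, hw⟩
    set L := y.length with hL
    have hL0 : 0 < L := List.length_pos_iff.mpr hy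
    have hper : ∀ n, ww (n + L) = ww n := by
      intro n
      have h1 : ww (n + L) = y[(n + L) % L]'(Nat.mod_lt _ hL0) := by
        rw [hw]; rfl
      have h2 : ww n = y[n % L]'(Nat.mod_lt _ hL0) := by
        rw [hw]; rfl
      rw [h1, h2]
      congr 1
      exact Nat.add_mod_right n L
    have hdper : ∀ n, dd (n + L) = dd n := by
      intro n
      rw [dd_eq, dd_eq]
      have : n + L + 1 = (n + 1) + L := by omega
      rw [this, hper, hper]
    -- take n = 2^(L+1); then dd n = 0 but dd (n+L) should be 0 too, contradiction
    set n := 2 ^ (L + 1) with hn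
    have hdn : dd n = 0 := (dd_zero_iff n).mpr ⟨L, rfl⟩
    have hLlt : L < 2 ^ (L + 1) := lt_of_lt_of_le (Nat.lt_two_pow_self (n := L))
      (Nat.pow_le_pow_right (by norm_num) (Nat.le_succ L))
    have hdnL : dd (n + L) = 1 := by
      unfold dd
      rw [if_neg]
      rintro ⟨m, _, hm⟩
      have h1 : 2 ^ (L + 1) < 2 ^ (m + 1) := by omega
      have h2 : L + 1 < m + 1 := (Nat.pow_lt_pow_iff_right (by norm_num)).mp h1
      have h3 : 2 ^ (L + 2) ≤ 2 ^ (m + 1) := Nat.pow_le_pow_right (by norm_num) (by omega)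
      have h4 : 2 ^ (L + 2) = 2 * 2 ^ (L + 1) := by ring
      omega
    rw [hdper n, hdn] at hdnL
    exact absurd hdnL (by decide)
  · rintro x ⟨i, hi⟩ hlen ⟨j, hj⟩
    set n := x.length with hn
    have hget : ∀ m (hm : m < n), x[m]'hm = ww (i + m) := by
      intro m hm
      rw [List.getElem_of_eq hi]
      simp
    have hrlen : x.reverse.length = n := by simp [hn]
    have hrget : ∀ m (hm : m < n), x[n - 1 - m]'(by omega) = ww (j + m) := by
      intro m hm
      have hm' : m < x.reverse.length := by omega
      have h1 : x.reverse[m]'hm' = ww (j + m) := by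
        rw [List.getElem_of_eq hj]
        simp
      rw [← h1]
      rw [List.getElem_reverse]
    set a := i + (n - 3) with ha
    have key : ∀ m, m < 3 → ww (j + m) = ww (i + (n - 1 - m)) := by
      intro m hm
      exact (hrget m (by omega)).symm.trans (hget (n - 1 - m) (by omega))
    have e0 : ww j = ww (a + 2) := by
      have h := key 0 (by omega)
      rw [show i + (n - 1 - 0) = a + 2 by omega] at h
      simpa using h
    have e1 : ww (j + 1) = ww (a + 1) := by
      have h := key 1 (by omega)
      rw [show i + (n - 1 - 1) = a + 1 by omega] at h
      exact h
    have e2 : ww (j + 2) = ww a := by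
      have h := key 2 (by omega)
      rw [show i + (n - 1 - 2) = a by omega] at h
      exact h
    have f1 : dd j = - dd (a + 1) := by
      rw [dd_eq, dd_eq, e0, e1]; abel
    have f2 : dd (j + 1) = - dd a := by
      rw [dd_eq, dd_eq]
      have : j + 1 + 1 = j + 2 := by omega
      rw [this, e1, e2]; abel
    have ha1 : dd (a + 1) = 0 := by
      rcases dd01 (a + 1) with h | h
      · exact h
      · rw [h] at f1
        rcases dd01 j with h' | h' <;> rw [h'] at f1 <;> exact absurd f1 (by decide)
    have ha0 : dd a = 0 := by
      rcases dd01 a with h | h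
      · exact h
      · rw [h] at f2
        rcases dd01 (j + 1) with h' | h' <;> rw [h'] at f2 <;> exact absurd f2 (by decide)
    exact dd_no_two a ⟨ha0, ha1⟩
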